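/- For every positive integer n, the total number of staircase tableaux of size n equals 4^n · n!. -/

import Mathlib

inductive SLetter : Type
  | A | B | G | D
deriving DecidableEq, Repr

instance instFintypeSLetter : Fintype SLetter :=
  ⟨{SLetter.A, SLetter.B, SLetter.G, SLetter.D}, fun x => by cases x <;> decide⟩

/-- A filling `T` of the staircase Young diagram of shape `(n, n-1, …, 1)`
(boxes `(i,j)` with `i + j < n`, row `i` from the top, column `j` from the left,
diagonal boxes those with `i + j + 1 = n`) is a staircase tableau if:
boxes outside the shape are unused (empty); no diagonal box is empty;
all boxes to the left of a `β` or `δ` in its row are empty;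
all boxes above an `α` or `γ` in its column are empty. -/
def IsStaircase (n : ℕ) (T : Fin n → Fin n → Option SLetter) : Prop :=
  (∀ i j : Fin n, n ≤ (i : ℕ) + (j : ℕ) → T i j = none) ∧
  (∀ i j : Fin n, (i : ℕ) + (j : ℕ) + 1 = n → T i j ≠ none) ∧
  (∀ i j j' : Fin n, j' < j → (T i j = some SLetter.B ∨ T i j = some SLetter.D) →
      T i j' = none) ∧
  (∀ i i' j : Fin n, i' < i → (T i j = some SLetter.A ∨ T i j = some SLetter.G) →
      T i' j = none)

instance (n : ℕ) : DecidablePred (IsStaircase n) := fun T => by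
  unfold IsStaircase; infer_instance

/-- The staircase tableaux of size `n`. -/
def StaircaseTableau (n : ℕ) : Type :=
  {T : Fin n → Fin n → Option SLetter // IsStaircase n T}

instance (n : ℕ) : Fintype (StaircaseTableau n) := Subtype.fintype _

instance (n : ℕ) : DecidableEq (StaircaseTableau n) := Subtype.instDecidableEq

/-- The number of boxes of `T` filled with the symbol `x`. -/
def countLetter (n : ℕ) (T : Fin n → Fin n → Option SLetter) (x : SLetter) : ℕ :=
  (Finset.univ.filter (fun p : Fin n × Fin n => T p.1 p.2 = some x)).card

/-- The label of the nearest labeled box strictly to the right of `(i,j)` in row `i`. -/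
def rightLabel (n : ℕ) (T : Fin n → Fin n → Option SLetter) (i j : Fin n) : Option SLetter :=
  List.findSome? (fun j' => T i j') ((List.finRange n).drop ((j : ℕ) + 1))

/-- The label of the nearest labeled box strictly below `(i,j)` in column `j`. -/
def belowLabel (n : ℕ) (T : Fin n → Fin n → Option SLetter) (i j : Fin n) : Option SLetter :=
  List.findSome? (fun i' => T i' j) ((List.finRange n).drop ((i : ℕ) + 1))

/-- Whether the (empty) box `(i,j)` receives a `q` in the weight of `T`:
an empty box seeing a `δ` to its right gets `q`; an empty box seeing an `α` or `γ` to
its right and a `β` or `γ` below it gets `q`; all other (empty) boxes get `1`. -/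
def boxQ (n : ℕ) (T : Fin n → Fin n → Option SLetter) (i j : Fin n) : Bool :=
  match T i j with
  | some _ => false
  | none =>
    match rightLabel n T i j, belowLabel n T i j with
    | some SLetter.D, _ => true
    | some SLetter.A, some SLetter.B => true
    | some SLetter.A, some SLetter.G => true
    | some SLetter.G, some SLetter.B => true
    | some SLetter.G, some SLetter.G => true
    | _, _ => false

/-- The exponent of `q` in the weight of `T`. -/
def qCount (n : ℕ) (T : Fin n → Fin n → Option SLetter) : ℕ :=
  (Finset.univ.filter (fun p : Fin n × Fin n => boxQ n T p.1 p.2 = true)).card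

/-- The type of `T`, as a word in `Fin n → Bool`, read off the diagonal boxes from
northeast (index `0`) to southwest (index `n-1`): `true` (a `•`) for each `α` or `δ`,
`false` (a `∘`) for each `β` or `γ`. -/
def typeWord (n : ℕ) (T : Fin n → Fin n → Option SLetter) : Fin n → Bool := fun i =>
  match T i ⟨n - 1 - (i : ℕ), by have := i.isLt; omega⟩ with
  | some SLetter.A => true
  | some SLetter.D => true
  | _ => false

/-- `t(T)`, the number of `•`'s in the type of `T`. -/
def bulletCount (n : ℕ) (T : Fin n → Fin n → Option SLetter) : ℕ :=
  (Finset.univ.filter (fun i : Fin n => typeWord n T i = true)).card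

/-- The weight of a staircase tableau: the product of all its labels, with each empty
box contributing `q` or `1` according to the rules (`u` is set to `1`). -/
def stWt {R : Type*} [CommSemiring R] (n : ℕ) (a b g d q : R)
    (T : Fin n → Fin n → Option SLetter) : R :=
  a ^ countLetter n T SLetter.A * b ^ countLetter n T SLetter.B *
    g ^ countLetter n T SLetter.G * d ^ countLetter n T SLetter.D * q ^ qCount n T

/-- The fugacity partition function `Z_n(y; α, β, γ, δ; q) = Σ_T wt(T) y^{t(T)}`,
summed over all staircase tableaux of size `n`. -/
def stZ (R : Type*) [CommSemiring R] (n : ℕ) (y a b g d q : R) : R :=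
  ∑ T : StaircaseTableau n, stWt n a b g d q T.val * y ^ bulletCount n T.val

/-- The generating polynomial `Z_σ(α, β, γ, δ; q)` of staircase tableaux of a given
type `σ` (encoded as a list of booleans, `true` = `•`, `false` = `∘`). -/
def stZw (R : Type*) [CommSemiring R] (w : List Bool) (a b g d q : R) : R :=
  ∑ T ∈ Finset.univ.filter
      (fun T : StaircaseTableau w.length => List.ofFn (typeWord w.length T.val) = w),
    stWt w.length a b g d q T.val

/-
Weight a staircase tableau by `u` for each column containing an `α` or a `γ` and by `v` for each
other column. Deleting the top row of a tableau of size `n + 1` leaves a tableau `T` of size `n`;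
the possible top rows are those with a filled diagonal box, with empty boxes above the `α`/`γ`
columns of `T`, and with only empty boxes to the left of a `β` or `δ`. Summing over them, the
total weight of the extensions of `T` is `2u + 2v` times the weight of `T` with `v` replaced by
`2u + v`. Hence the total weight of all tableaux of size `n` is `∏_{j < n} (2v + (4j + 2)u)`,
which is `4^n n!` at `u = v = 1`.
-/

open Finset

def IsAG (x : Option SLetter) : Prop := x = some .A ∨ x = some .G

def IsBD (x : Option SLetter) : Prop := x = some .B ∨ x = some .D

instance : DecidablePred IsAG := fun _ => by unfold IsAG; infer_instance

instance : DecidablePred IsBD := fun _ => by unfold IsBD; infer_instance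

theorem SLetter.sum_univ {M : Type*} [AddCommMonoid M] (F : SLetter → M) :
    ∑ s, F s = F .A + F .B + F .G + F .D := by
  show ∑ s ∈ {SLetter.A, .B, .G, .D}, F s = _
  simp [add_assoc]

theorem Fintype.sum_fin_succ_pi {X M : Type*} [Fintype X] [AddCommMonoid M] {N : ℕ}
    (F : (Fin (N + 1) → X) → M) : ∑ f, F f = ∑ x, ∑ t, F (Fin.cons x t) := by
  rw [← (Fin.consEquiv fun _ => X).sum_comp, Fintype.sum_prod_type]
  rfl

def EmptyBefore (P : Option SLetter → Prop) {N : ℕ} (g : Fin N → Option SLetter) : Prop :=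
  ∀ k k', k' < k → P (g k) → g k' = none

instance (P : Option SLetter → Prop) [DecidablePred P] {N : ℕ} :
    DecidablePred (EmptyBefore P (N := N)) := fun _ => by
  unfold EmptyBefore; infer_instance

section EmptyBefore

variable {P : Option SLetter → Prop} {N : ℕ}

theorem emptyBefore_cons (x : Option SLetter) (t : Fin N → Option SLetter) :
    EmptyBefore P (Fin.cons x t : Fin (N + 1) → Option SLetter) ↔
      EmptyBefore P t ∧ ∀ k, P (t k) → x = none := by
  simp only [EmptyBefore, Fin.forall_fin_succ, Fin.cons_zero, Fin.cons_succ, Fin.succ_lt_succ_iff,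
    Fin.not_lt_zero, Fin.succ_pos, false_imp_iff, forall_const, true_and, forall_and,
    implies_true]
  exact and_comm

theorem emptyBefore_snoc_none (hP : ¬ P none) (t : Fin N → Option SLetter) :
    EmptyBefore P (Fin.snoc t none : Fin (N + 1) → Option SLetter) ↔ EmptyBefore P t := by
  simp only [EmptyBefore, Fin.forall_fin_succ', Fin.snoc_castSucc, Fin.snoc_last,
    Fin.castSucc_lt_castSucc_iff, hP, false_imp_iff, implies_true, and_true]

theorem emptyBefore_of_forall_not {g : Fin N → Option SLetter} (h : ∀ k, ¬ P (g k)) :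
    EmptyBefore P g :=
  fun k _ _ hk => absurd hk (h k)

end EmptyBefore

section Weights

variable {R : Type*} [CommSemiring R] (u v : R)

def letterWeight (x : Option SLetter) : R := if IsAG x then u else v

-- A blocked box lies below an `α` or `γ`: it must stay empty, and its column has weight `u`.
def boxWeight (blocked : Bool) (x : Option SLetter) : R :=
  if blocked then (if x = none then u else 0) else letterWeight u v x

def rowWeight {N : ℕ} (b : Fin N → Bool) (f : Fin (N + 1) → Option SLetter) : R :=
  (∏ j, boxWeight u v (b j) (f j.castSucc)) * letterWeight u v (f (Fin.last N))

theorem rowWeight_cons {N : ℕ} (b₀ : Bool) (b : Fin N → Bool) (x : Option SLetter)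
    (t : Fin (N + 1) → Option SLetter) :
    rowWeight u v (Fin.cons b₀ b) (Fin.cons x t) = boxWeight u v b₀ x * rowWeight u v b t := by
  simp only [rowWeight, Fin.prod_univ_succ, Fin.cons_zero, Fin.castSucc_zero, Fin.cons_succ,
    ← Fin.succ_castSucc, ← Fin.succ_last]
  ring

theorem rowWeight_eq_ite {N : ℕ} (b : Fin N → Bool) (f : Fin (N + 1) → Option SLetter) :
    rowWeight u v b f =
      if ∀ j, b j → f j.castSucc = none then
        (∏ j, if b j then u else letterWeight u v (f j.castSucc)) *
          letterWeight u v (f (Fin.last N))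
      else 0 := by
  have hbox (c : Bool) (x : Option SLetter) : boxWeight u v c x =
      if c → x = none then (if c then u else letterWeight u v x) else 0 := by
    cases c <;> by_cases hx : x = none <;> simp [boxWeight, hx]
  simp only [rowWeight, hbox, prod_ite_zero, mem_univ, true_imp_iff, ite_zero_mul]

theorem sum_boxWeight_of_not_isBD (b : Bool) :
    ∑ x, (if ¬ IsBD x then boxWeight u v b x else 0) = if b then u else 2 * u + v := by
  cases b <;> simp [Fintype.sum_option, SLetter.sum_univ, boxWeight, letterWeight, IsAG, IsBD]
  ring

theorem sum_rowWeight_of_forall_not_isBD {N : ℕ} (b : Fin N → Bool) :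
    ∑ f : Fin (N + 1) → Option SLetter,
      (if f (Fin.last N) ≠ none ∧ ∀ j, ¬ IsBD (f j) then rowWeight u v b f else 0) =
      2 * u * ∏ j, (if b j then u else 2 * u + v) := by
  induction N with
  | zero =>
    simp [Fintype.sum_fin_succ_pi, Fintype.sum_option, SLetter.sum_univ, rowWeight, letterWeight,
      IsAG, IsBD]
    ring
  | succ N ih =>
    rw [← Fin.cons_self_tail b, Fintype.sum_fin_succ_pi]
    have hsplit (x : Option SLetter) (t : Fin (N + 1) → Option SLetter) :
        (if (Fin.cons x t : Fin (N + 2) → Option SLetter) (Fin.last (N + 1)) ≠ none ∧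
            ∀ j, ¬ IsBD ((Fin.cons x t : Fin (N + 2) → Option SLetter) j)
          then rowWeight u v (Fin.cons (b 0) (Fin.tail b)) (Fin.cons x t) else 0) =
        (if ¬ IsBD x then boxWeight u v (b 0) x else 0) *
          (if t (Fin.last N) ≠ none ∧ ∀ j, ¬ IsBD (t j) then rowWeight u v (Fin.tail b) t
            else 0) := by
      rw [ite_zero_mul_ite_zero, rowWeight_cons, ← Fin.succ_last, Fin.cons_succ]
      simp only [Fin.forall_fin_succ, Fin.cons_zero, Fin.cons_succ]
      exact if_congr (by tauto) rfl rfl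
    simp only [hsplit, ← sum_mul_sum, ih, sum_boxWeight_of_not_isBD, Fin.prod_univ_succ,
      Fin.cons_zero, Fin.cons_succ]
    ring

theorem sum_rowWeight_of_emptyBefore {N : ℕ} (b : Fin N → Bool) :
    ∑ f : Fin (N + 1) → Option SLetter,
      (if f (Fin.last N) ≠ none ∧ EmptyBefore IsBD f then rowWeight u v b f else 0) =
      (2 * u + 2 * v) * ∏ j, (if b j then u else 2 * u + v) := by
  induction N with
  | zero =>
    have hsingle (f : Fin 1 → Option SLetter) : EmptyBefore IsBD f := fun k k' hk =>
      absurd hk (by simp [Subsingleton.elim k k'])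
    simp [Fintype.sum_fin_succ_pi, Fintype.sum_option, SLetter.sum_univ, rowWeight, letterWeight,
      IsAG, hsingle]
    ring
  | succ N ih =>
    rw [← Fin.cons_self_tail b, Fintype.sum_fin_succ_pi, Fintype.sum_option]
    have hnone (t : Fin (N + 1) → Option SLetter) :
        (if (Fin.cons none t : Fin (N + 2) → Option SLetter) (Fin.last (N + 1)) ≠ none ∧
            EmptyBefore IsBD (Fin.cons none t : Fin (N + 2) → Option SLetter)
          then rowWeight u v (Fin.cons (b 0) (Fin.tail b)) (Fin.cons none t) else 0) =
        boxWeight u v (b 0) none *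
          (if t (Fin.last N) ≠ none ∧ EmptyBefore IsBD t then rowWeight u v (Fin.tail b) t
            else 0) := by
      simp only [emptyBefore_cons, rowWeight_cons, ← Fin.succ_last, Fin.cons_succ, implies_true,
        and_true, mul_ite_zero]
    have hsome (s : SLetter) (t : Fin (N + 1) → Option SLetter) :
        (if (Fin.cons (some s) t : Fin (N + 2) → Option SLetter) (Fin.last (N + 1)) ≠ none ∧
            EmptyBefore IsBD (Fin.cons (some s) t : Fin (N + 2) → Option SLetter)
          then rowWeight u v (Fin.cons (b 0) (Fin.tail b)) (Fin.cons (some s) t) else 0) =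
        boxWeight u v (b 0) (some s) *
          (if t (Fin.last N) ≠ none ∧ ∀ j, ¬ IsBD (t j) then rowWeight u v (Fin.tail b) t
            else 0) := by
      simp only [emptyBefore_cons, rowWeight_cons, ← Fin.succ_last, Fin.cons_succ, reduceCtorEq,
        imp_false, mul_ite_zero]
      exact if_congr (and_congr_right fun _ => and_iff_right_of_imp emptyBefore_of_forall_not)
        rfl rfl
    simp only [hnone, hsome, ← mul_sum, ← sum_mul, ih,
      sum_rowWeight_of_forall_not_isBD, Fin.prod_univ_succ, Fin.cons_zero, Fin.cons_succ]
    cases b 0 <;> simp [SLetter.sum_univ, boxWeight, letterWeight, IsAG] <;> ring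

end Weights

theorem isStaircase_iff {n : ℕ} (T : Fin n → Fin n → Option SLetter) :
    IsStaircase n T ↔ (∀ i j : Fin n, n ≤ (i : ℕ) + j → T i j = none) ∧
      (∀ i j : Fin n, (i : ℕ) + j + 1 = n → T i j ≠ none) ∧
      (∀ i, EmptyBefore IsBD (T i)) ∧ ∀ j, EmptyBefore IsAG (fun i => T i j) :=
  and_congr_right' <| and_congr_right' <| and_congr_right'
    ⟨fun h j i i' => h i i' j, fun h i i' j => h j i i'⟩

def IsAGColumn {n : ℕ} (T : Fin n → Fin n → Option SLetter) (j : Fin n) : Prop :=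
  ∃ i, IsAG (T i j)

instance {n : ℕ} (T : Fin n → Fin n → Option SLetter) : DecidablePred (IsAGColumn T) :=
  fun _ => by unfold IsAGColumn; infer_instance

def columnWeight {R : Type*} [CommSemiring R] (u v : R) {n : ℕ}
    (T : Fin n → Fin n → Option SLetter) : R :=
  ∏ j, if IsAGColumn T j then u else v

def addTopRow {n : ℕ} (T : Fin n → Fin n → Option SLetter)
    (f : Fin (n + 1) → Option SLetter) : Fin (n + 1) → Fin (n + 1) → Option SLetter :=
  Fin.cons f fun i => Fin.snoc (T i) none

section addTopRow

variable {n : ℕ} (T : Fin n → Fin n → Option SLetter) (f : Fin (n + 1) → Option SLetter)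

@[simp] theorem addTopRow_zero : addTopRow T f 0 = f := rfl

@[simp] theorem addTopRow_succ (i : Fin n) :
    addTopRow T f i.succ = (Fin.snoc (T i) none : Fin (n + 1) → Option SLetter) := rfl

theorem addTopRow_column_castSucc (j : Fin n) :
    (fun i => addTopRow T f i j.castSucc) =
      (Fin.cons (f j.castSucc) fun i => T i j : Fin (n + 1) → Option SLetter) := by
  ext i : 1
  cases i using Fin.cases <;> simp

theorem addTopRow_column_last :
    (fun i => addTopRow T f i (Fin.last n)) =
      (Fin.cons (f (Fin.last n)) fun _ => none : Fin (n + 1) → Option SLetter) := by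
  ext i : 1
  cases i using Fin.cases <;> simp

theorem addTopRow_injective :
    Function.Injective (Function.uncurry (addTopRow (n := n))) := by
  rintro ⟨T, f⟩ ⟨T', f'⟩ h
  have hrow := congrFun h 0
  have hT : T = T' := funext fun i => funext fun j => by
    simpa using congrFun (congrFun h i.succ) j.castSucc
  simp_all

theorem exists_addTopRow_eq {T : Fin (n + 1) → Fin (n + 1) → Option SLetter}
    (h : IsStaircase (n + 1) T) : ∃ T' f, addTopRow T' f = T := by
  refine ⟨fun i j => T i.succ j.castSucc, T 0, funext fun i => ?_⟩
  cases i using Fin.cases with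
  | zero => rfl
  | succ i =>
    ext j : 1
    cases j using Fin.lastCases with
    | last => simpa using (h.1 i.succ (Fin.last n) (by simp)).symm
    | cast j => simp

theorem addTopRow_outside_shape_iff :
    (∀ i j : Fin (n + 1), n + 1 ≤ (i : ℕ) + j → addTopRow T f i j = none) ↔
      ∀ i j : Fin n, n ≤ (i : ℕ) + j → T i j = none := by
  rw [Fin.forall_fin_succ]
  simp only [addTopRow_zero, addTopRow_succ, Fin.forall_fin_succ', Fin.snoc_castSucc,
    Fin.snoc_last, Fin.val_zero, Fin.val_succ, Fin.val_castSucc, Fin.val_last, implies_true,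
    and_true]
  exact ⟨fun h i j hij => h.2 i j (by omega), fun h =>
    ⟨⟨fun j hj => absurd hj (by omega), fun hn => absurd hn (by omega)⟩,
      fun i j hij => h i j (by omega)⟩⟩

theorem addTopRow_diagonal_iff :
    (∀ i j : Fin (n + 1), (i : ℕ) + j + 1 = n + 1 → addTopRow T f i j ≠ none) ↔
      (∀ i j : Fin n, (i : ℕ) + j + 1 = n → T i j ≠ none) ∧ f (Fin.last n) ≠ none := by
  rw [Fin.forall_fin_succ]
  simp only [addTopRow_zero, addTopRow_succ, Fin.forall_fin_succ', Fin.snoc_castSucc,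
    Fin.snoc_last, Fin.val_zero, Fin.val_succ, Fin.val_castSucc, Fin.val_last]
  exact ⟨fun h => ⟨fun i j hij => (h.2 i).1 j (by omega), h.1.2 (by omega)⟩, fun h =>
    ⟨⟨fun j hj => absurd hj (by omega), fun _ => h.2⟩,
      fun i => ⟨fun j hij => h.1 i j (by omega), fun hi => absurd hi (by omega)⟩⟩⟩

theorem addTopRow_rows_iff :
    (∀ i, EmptyBefore IsBD (addTopRow T f i)) ↔
      EmptyBefore IsBD f ∧ ∀ i, EmptyBefore IsBD (T i) := by
  simp only [Fin.forall_fin_succ, addTopRow_zero, addTopRow_succ,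
    emptyBefore_snoc_none (by simp [IsBD] : ¬ IsBD none)]

theorem addTopRow_columns_iff :
    (∀ j, EmptyBefore IsAG fun i => addTopRow T f i j) ↔
      (∀ j, EmptyBefore IsAG fun i => T i j) ∧
        ∀ j, IsAGColumn T j → f j.castSucc = none := by
  have hnone : ¬ IsAG none := by simp [IsAG]
  simp only [Fin.forall_fin_succ', addTopRow_column_castSucc, addTopRow_column_last,
    emptyBefore_cons, forall_and, IsAGColumn, forall_exists_index,
    emptyBefore_of_forall_not (fun _ => hnone), hnone, false_imp_iff, implies_true, and_true]

theorem isStaircase_addTopRow_iff :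
    IsStaircase (n + 1) (addTopRow T f) ↔ IsStaircase n T ∧ f (Fin.last n) ≠ none ∧
      EmptyBefore IsBD f ∧ ∀ j, IsAGColumn T j → f j.castSucc = none := by
  rw [isStaircase_iff, isStaircase_iff, addTopRow_outside_shape_iff, addTopRow_diagonal_iff,
    addTopRow_rows_iff, addTopRow_columns_iff]
  tauto

theorem isAGColumn_addTopRow_castSucc (j : Fin n) :
    IsAGColumn (addTopRow T f) j.castSucc ↔ IsAG (f j.castSucc) ∨ IsAGColumn T j := by
  simp [IsAGColumn, Fin.exists_fin_succ]

theorem isAGColumn_addTopRow_last :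
    IsAGColumn (addTopRow T f) (Fin.last n) ↔ IsAG (f (Fin.last n)) := by
  simp [IsAGColumn, Fin.exists_fin_succ, IsAG]

theorem columnWeight_addTopRow {R : Type*} [CommSemiring R] (u v : R) :
    columnWeight u v (addTopRow T f) =
      (∏ j, if IsAGColumn T j then u else letterWeight u v (f j.castSucc)) *
        letterWeight u v (f (Fin.last n)) := by
  rw [columnWeight, Fin.prod_univ_castSucc]
  simp only [isAGColumn_addTopRow_castSucc, isAGColumn_addTopRow_last, letterWeight]
  congr 1
  refine prod_congr rfl fun j _ => ?_
  by_cases hj : IsAGColumn T j <;> simp [hj]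

end addTopRow

theorem sum_columnWeight_succ {R : Type*} [CommSemiring R] (u v : R) (n : ℕ) :
    ∑ T, (if IsStaircase (n + 1) T then columnWeight u v T else 0) =
      (2 * u + 2 * v) * ∑ T, (if IsStaircase n T then columnWeight u (2 * u + v) T else 0) := by
  set F : (Fin (n + 1) → Fin (n + 1) → Option SLetter) → R :=
    fun T => if IsStaircase (n + 1) T then columnWeight u v T else 0
  have hout (T) (hT : T ∉ Set.range (Function.uncurry addTopRow)) : F T = 0 := by
    refine if_neg fun h => hT ?_
    obtain ⟨T', f, rfl⟩ := exists_addTopRow_eq h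
    exact ⟨(T', f), rfl⟩
  rw [← Fintype.sum_of_injective _ addTopRow_injective _ F hout fun _ => rfl,
    Fintype.sum_prod_type, mul_sum]
  refine Fintype.sum_congr _ _ fun T => ?_
  by_cases hT : IsStaircase n T
  · have hrow := sum_rowWeight_of_emptyBefore u v fun j => decide (IsAGColumn T j)
    simp only [decide_eq_true_eq] at hrow
    rw [if_pos hT, columnWeight, ← hrow]
    refine Fintype.sum_congr _ _ fun f => ?_
    simp only [F, Function.uncurry_apply_pair, isStaircase_addTopRow_iff, hT, true_and,
      columnWeight_addTopRow, rowWeight_eq_ite, decide_eq_true_eq, ite_and]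
  · simp [F, isStaircase_addTopRow_iff, hT]

theorem sum_columnWeight {R : Type*} [CommSemiring R] (u v : R) (n : ℕ) :
    ∑ T, (if IsStaircase n T then columnWeight u v T else 0) =
      ∏ j ∈ range n, (2 * v + (4 * j + 2) * u) := by
  induction n generalizing v with
  | zero => simp [IsStaircase, columnWeight]
  | succ n ih =>
    rw [sum_columnWeight_succ, ih, prod_range_succ']
    push_cast
    rw [mul_comm]
    congr 1
    · exact prod_congr rfl fun j _ => by ring
    · ring

theorem card_staircaseTableau_general (n : ℕ) :
    Fintype.card (StaircaseTableau n) = 4 ^ n * n.factorial := by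
  have hcard : Fintype.card (StaircaseTableau n) = #(univ.filter (IsStaircase n)) :=
    Fintype.card_subtype _
  have hweight (T : Fin n → Fin n → Option SLetter) : columnWeight 1 1 T = 1 := by
    simp [columnWeight]
  calc Fintype.card (StaircaseTableau n)
      = ∑ T, (if IsStaircase n T then columnWeight 1 1 T else 0) := by
        simp only [hcard, card_eq_sum_ones, sum_filter, hweight]
    _ = ∏ j ∈ range n, 4 * (j + 1) := by
        rw [sum_columnWeight]
        exact prod_congr rfl fun j _ => by push_cast; ring
    _ = 4 ^ n * n.factorial := by
        rw [prod_mul_distrib, prod_const, card_range, prod_range_add_one_eq_factorial]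

/-- For every positive integer `n`, the total number of staircase tableaux of size `n`
equals `4^n · n!`. -/
theorem card_staircaseTableau (n : ℕ) (hn : 1 ≤ n) :
    Fintype.card (StaircaseTableau n) = 4 ^ n * n.factorial :=
  card_staircaseTableau_general n
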